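/- The map φ_k(g,f) = (g(z^k), z, ..., z, f(z^k)/z^{k-1}) from the Riordan group into the k-Riordan group is an injective group homomorphism. -/

import Mathlib

open PowerSeries

variable {K : Type*} [Field K]

/-- Composition (substitution) of formal power series: `pcomp A f = A ∘ f`,
intended for `f` with zero constant term, where `coeff n (f ^ k) = 0` for `k > n`. -/
noncomputable def pcomp (A f : PowerSeries K) : PowerSeries K :=
  PowerSeries.mk fun n => ∑ k ∈ Finset.range (n + 1), coeff k A * coeff n (f ^ k)


lemma coeff_pow_zero_of_lt {f : PowerSeries K} (hf : constantCoeff f = 0)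
    {n m : ℕ} (h : n < m) : coeff n (f ^ m) = 0 := by
  obtain ⟨u, hu⟩ := X_dvd_iff.mpr hf
  have hfm : f ^ m = u ^ m * X ^ m := by rw [hu]; ring
  rw [hfm, coeff_mul_X_pow', if_neg (by omega)]

lemma coeff_eval₂ {f : PowerSeries K} (hf : constantCoeff f = 0) (p : Polynomial K) (n : ℕ) :
    coeff n (Polynomial.eval₂ C f p)
      = ∑ i ∈ Finset.range (n + 1), p.coeff i * coeff n (f ^ i) := by
  rw [Polynomial.eval₂_eq_sum_range' C
      (show p.natDegree < max (p.natDegree + 1) (n + 1) by omega) f, map_sum]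
  rw [Finset.sum_congr rfl (fun i _ => coeff_C_mul n (f ^ i) (p.coeff i))]
  symm
  apply Finset.sum_subset (Finset.range_subset_range.mpr (by omega))
  intro i hi hni
  simp only [Finset.mem_range] at hi hni
  rw [coeff_pow_zero_of_lt hf (by omega), mul_zero]

lemma coeff_pcomp_eq_eval₂ {f : PowerSeries K} (hf : constantCoeff f = 0)
    (A : PowerSeries K) {n m : ℕ} (hm : n < m) :
    coeff n (pcomp A f) = coeff n (Polynomial.eval₂ C f (trunc m A)) := by
  rw [coeff_eval₂ hf, pcomp, coeff_mk]
  refine Finset.sum_congr rfl fun i hi => ?_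
  simp only [Finset.mem_range] at hi
  rw [coeff_trunc, if_pos (by omega)]

lemma pcomp_mul {f : PowerSeries K} (hf : constantCoeff f = 0) (A B : PowerSeries K) :
    pcomp (A * B) f = pcomp A f * pcomp B f := by
  ext n
  rw [coeff_pcomp_eq_eval₂ hf (A * B) (Nat.lt_succ_self n)]
  have key : coeff n (Polynomial.eval₂ C f (trunc (n+1) (A*B)))
      = coeff n (Polynomial.eval₂ C f (trunc (n+1) A * trunc (n+1) B)) := by
    rw [coeff_eval₂ hf, coeff_eval₂ hf]
    refine Finset.sum_congr rfl fun i hi => ?_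
    simp only [Finset.mem_range] at hi
    congr 1
    rw [coeff_trunc, if_pos (by omega), PowerSeries.coeff_mul, Polynomial.coeff_mul]
    refine Finset.sum_congr rfl fun p hp => ?_
    have hmem := Finset.HasAntidiagonal.mem_antidiagonal.mp hp
    rw [coeff_trunc, coeff_trunc, if_pos (by omega), if_pos (by omega)]
  rw [key, Polynomial.eval₂_mul, PowerSeries.coeff_mul, PowerSeries.coeff_mul]
  refine Finset.sum_congr rfl fun p hp => ?_
  have hmem := Finset.HasAntidiagonal.mem_antidiagonal.mp hp
  rw [coeff_pcomp_eq_eval₂ hf A (show p.1 < n + 1 by omega),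
      coeff_pcomp_eq_eval₂ hf B (show p.2 < n + 1 by omega)]

lemma pcomp_one (f : PowerSeries K) : pcomp 1 f = (1 : PowerSeries K) := by
  ext n
  rw [pcomp, coeff_mk, Finset.sum_eq_single 0]
  · simp
  · intro i _ hi; simp [coeff_one, hi]
  · simp

lemma pcomp_pow {f : PowerSeries K} (hf : constantCoeff f = 0) (A : PowerSeries K) (m : ℕ) :
    pcomp (A ^ m) f = (pcomp A f) ^ m := by
  induction m with
  | zero => simp [pcomp_one]
  | succ m ih => rw [pow_succ, pcomp_mul hf, ih, pow_succ]

lemma pcomp_X {f : PowerSeries K} (hf : constantCoeff f = 0) : pcomp X f = f := by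
  ext n
  rw [pcomp, coeff_mk]
  rcases Nat.eq_zero_or_pos n with rfl | hn
  · simp [coeff_zero_eq_constantCoeff, hf]
  · rw [Finset.sum_eq_single 1]
    · simp
    · intro i _ hi; simp [coeff_X, hi]
    · intro hmem; exact absurd (Finset.mem_range.mpr (by omega)) hmem

lemma pcomp_assoc {u v : PowerSeries K} (hu : constantCoeff u = 0)
    (hv : constantCoeff v = 0) (A : PowerSeries K) :
    pcomp (pcomp A u) v = pcomp A (pcomp u v) := by
  ext n
  have L : coeff n (pcomp (pcomp A u) v)
      = ∑ i ∈ Finset.range (n+1), ∑ j ∈ Finset.range (n+1),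
          coeff j A * coeff i (u ^ j) * coeff n (v ^ i) := by
    rw [pcomp, coeff_mk]
    refine Finset.sum_congr rfl fun i hi => ?_
    simp only [Finset.mem_range] at hi
    rw [pcomp, coeff_mk, Finset.sum_mul]
    apply Finset.sum_subset (Finset.range_subset_range.mpr (by omega))
    intro j hj hji
    simp only [Finset.mem_range] at hj hji
    rw [coeff_pow_zero_of_lt hu (by omega), mul_zero, zero_mul]
  have R : coeff n (pcomp A (pcomp u v))
      = ∑ j ∈ Finset.range (n+1), ∑ i ∈ Finset.range (n+1),
          coeff j A * coeff i (u ^ j) * coeff n (v ^ i) := by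
    rw [pcomp, coeff_mk]
    refine Finset.sum_congr rfl fun j hj => ?_
    rw [← pcomp_pow hv, pcomp, coeff_mk, Finset.mul_sum]
    exact Finset.sum_congr rfl fun i hi => by ring
  rw [L, R, Finset.sum_comm]

lemma coeff_pcomp_Xpow (A : PowerSeries K) {k : ℕ} (hk : 1 ≤ k) (n : ℕ) :
    coeff (n * k) (pcomp A (X ^ k)) = coeff n A := by
  rw [pcomp, coeff_mk, Finset.sum_eq_single n]
  · rw [← pow_mul, coeff_X_pow, if_pos (Nat.mul_comm n k), mul_one]
  · intro i _ hi
    rw [← pow_mul, coeff_X_pow, if_neg, mul_zero]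
    intro hcon
    exact hi (Nat.eq_of_mul_eq_mul_left (show 0 < k by omega)
      (show k * i = k * n by rw [← hcon]; ring))
  · intro hmem
    exact absurd (Finset.mem_range.mpr (Nat.lt_succ_of_le (Nat.le_mul_of_pos_right n (by omega)))) hmem

lemma pcomp_Xpow_inj {k : ℕ} (hk : 1 ≤ k) {A B : PowerSeries K}
    (h : pcomp A (X ^ k) = pcomp B (X ^ k)) : A = B := by
  ext n
  rw [← coeff_pcomp_Xpow A hk n, ← coeff_pcomp_Xpow B hk n, h]

/-- A formal power series is even if all its odd coefficients vanish. -/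
def IsEvenPS (g : PowerSeries K) : Prop := ∀ n : ℕ, Odd n → coeff n g = 0

/-- A formal power series is odd if all its even coefficients vanish. -/
def IsOddPS (f : PowerSeries K) : Prop := ∀ n : ℕ, Even n → coeff n f = 0

/-- The map φₖ(g,f) = (g(zᵏ), z,…,z, f(zᵏ)/zᵏ⁻¹) from the Riordan group to the
k-Riordan group is an injective group homomorphism: the k-Riordan product of
images equals the image of the Riordan product (g·(G∘f), F∘f), and equal images
force equal arguments. -/
theorem stmt15 (k : ℕ) (hk : 2 ≤ k) (g f G F fc Fc h a b : PowerSeries K)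
    (hg : constantCoeff g ≠ 0)
    (hf0 : constantCoeff f = 0) (hf1 : coeff 1 f ≠ 0)
    (hG : constantCoeff G ≠ 0)
    (hF0 : constantCoeff F = 0) (hF1 : coeff 1 F ≠ 0)
    (hfc : X ^ (k - 1) * fc = pcomp f (X ^ k))
    (hFc : X ^ (k - 1) * Fc = pcomp F (X ^ k))
    (hh0 : constantCoeff h = 0) (hh1 : coeff 1 h ≠ 0)
    (hsq : h ^ k = pcomp f (X ^ k))
    (ha : a * h = X) (hb : b * h = fc) :
    (pcomp g (X ^ k) * pcomp (pcomp G (X ^ k)) h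
        = pcomp (g * pcomp G f) (X ^ k) ∧
      a * pcomp X h = X ∧
      X ^ (k - 1) * (b * pcomp Fc h) = pcomp (pcomp F f) (X ^ k)) ∧
    ((pcomp g (X ^ k) = pcomp G (X ^ k) ∧ fc = Fc) → g = G ∧ f = F) := by
  have hXk : constantCoeff (X ^ k : PowerSeries K) = 0 := by
    rw [map_pow, constantCoeff_X, zero_pow (by omega)]
  have hXkh : pcomp (X ^ k) h = h ^ k := by rw [pcomp_pow hh0, pcomp_X hh0]
  have hne : h ≠ 0 := fun h0 => hh1 (by rw [h0, map_zero])
  refine ⟨⟨?_, ?_, ?_⟩, ?_⟩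
  · rw [pcomp_mul hXk g (pcomp G f)]
    congr 1
    rw [pcomp_assoc hXk hh0 G, hXkh, hsq, pcomp_assoc hf0 hXk G]
  · rw [pcomp_X hh0]; exact ha
  · have hb' : X ^ (k-1) * b = h ^ (k-1) := by
      apply mul_right_cancel₀ hne
      rw [mul_assoc, hb, hfc, ← hsq, ← pow_succ, Nat.sub_add_cancel (by omega)]
    calc X ^ (k-1) * (b * pcomp Fc h) = (X ^ (k-1) * b) * pcomp Fc h := by ring
    _ = h ^ (k-1) * pcomp Fc h := by rw [hb']
    _ = pcomp (X ^ (k-1)) h * pcomp Fc h := by rw [pcomp_pow hh0, pcomp_X hh0]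
    _ = pcomp (X ^ (k-1) * Fc) h := (pcomp_mul hh0 _ _).symm
    _ = pcomp (pcomp F (X ^ k)) h := by rw [hFc]
    _ = pcomp (pcomp F f) (X ^ k) := by
        rw [pcomp_assoc hXk hh0 F, hXkh, hsq, pcomp_assoc hf0 hXk F]
  · rintro ⟨h1, h2⟩
    refine ⟨pcomp_Xpow_inj (by omega) h1, pcomp_Xpow_inj (k := k) (by omega) ?_⟩
    have : X ^ (k-1) * fc = X ^ (k-1) * Fc := by rw [h2]
    rw [hfc, hFc] at this
    exact this
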